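/- arXiv:1608.00427 — 4 statements merged into one kernel-verified Lean document; each statement's English description precedes it below -/
import Mathlib

section
/- Let N ≥ 1 and let x_1, …, x_{N+1} ∈ ℝ^N be affinely independent. Suppose y and y* both lie in the open convex hull co{x_1,…,x_{N+1}} and y ≠ y*. Then there exist indices i and j such that ‖x_i − y‖ < ‖x_i − y*‖ and ‖x_j − y*‖ < ‖x_j − y‖; that is, some sensor is strictly closer to y than to y*, and some sensor is strictly closer to y* than to y. -/
/-!
The perpendicular bisector of `y` and `ystar` passes through their midpoint, which lies in the
interior of the hull. An interior point of a convex hull does not maximise a nonzero linear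
functional over the generating set, so applying this to `⟪y - ystar, ·⟫` and its negative yields
sensors strictly on each side of the bisector, i.e. strictly closer to `y`, resp. to `ystar`.
-/

open Filter Topology

variable {E : Type*} [NormedAddCommGroup E] [InnerProductSpace ℝ E]

theorem norm_sub_lt_norm_sub_iff_inner_midpoint_lt {a y z : E} :
    ‖a - y‖ < ‖a - z‖ ↔ inner ℝ (y - z) (midpoint ℝ y z) < inner ℝ (y - z) a := by
  rw [← sq_lt_sq₀ (norm_nonneg _) (norm_nonneg _), midpoint_eq_smul_add, norm_sub_sq_real,
    norm_sub_sq_real, real_inner_smul_right, inner_sub_left, inner_sub_left, inner_add_right,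
    inner_add_right, real_inner_comm y z, real_inner_comm a y, real_inner_comm a z,
    real_inner_self_eq_norm_sq, real_inner_self_eq_norm_sq]
  constructor <;> intro h <;> norm_num at h ⊢ <;> linarith

theorem exists_mem_inner_lt_of_mem_interior_convexHull {s : Set E} {m v : E} (hv : v ≠ 0)
    (hm : m ∈ interior (convexHull ℝ s)) : ∃ p ∈ s, inner ℝ v m < inner ℝ v p := by
  have hpath : Tendsto (fun t : ℝ ↦ m + t • v) (𝓝[>] 0) (𝓝 m) := by
    have : Continuous fun t : ℝ ↦ m + t • v := by fun_prop
    simpa using (this.tendsto 0).mono_left nhdsWithin_le_nhds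
  obtain ⟨t, ht_mem, ht_pos⟩ :=
    ((hpath.eventually (mem_interior_iff_mem_nhds.1 hm)).and self_mem_nhdsWithin).exists
  by_contra! hs
  have hhull : convexHull ℝ s ⊆ {p | inner ℝ v p ≤ inner ℝ v m} :=
    convexHull_min hs (convex_halfSpace_le (innerₛₗ ℝ v).isLinear _)
  have hle := hhull ht_mem
  simp only [Set.mem_ofPred_eq, inner_add_right, real_inner_smul_right,
    real_inner_self_eq_norm_sq] at hle
  have hv_sq : 0 < ‖v‖ ^ 2 := by positivity
  linarith [mul_pos ht_pos hv_sq]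

theorem exists_closer_sensor_both_sides_general {N : ℕ}
    (x : Fin (N + 1) → EuclideanSpace ℝ (Fin N))
    (y ystar : EuclideanSpace ℝ (Fin N))
    (hy : y ∈ interior (convexHull ℝ (Set.range x)))
    (hystar : ystar ∈ interior (convexHull ℝ (Set.range x)))
    (hne : y ≠ ystar) :
    (∃ i, ‖x i - y‖ < ‖x i - ystar‖) ∧ (∃ j, ‖x j - ystar‖ < ‖x j - y‖) := by
  have hmid : midpoint ℝ y ystar ∈ interior (convexHull ℝ (Set.range x)) :=
    (convex_convexHull ℝ _).interior.midpoint_mem hy hystar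
  obtain ⟨_, ⟨i, rfl⟩, hi⟩ :=
    exists_mem_inner_lt_of_mem_interior_convexHull (sub_ne_zero.2 hne) hmid
  obtain ⟨_, ⟨j, rfl⟩, hj⟩ :=
    exists_mem_inner_lt_of_mem_interior_convexHull (sub_ne_zero.2 hne.symm)
      (midpoint_comm (R := ℝ) y ystar ▸ hmid)
  exact ⟨⟨i, norm_sub_lt_norm_sub_iff_inner_midpoint_lt.2 hi⟩,
    ⟨j, norm_sub_lt_norm_sub_iff_inner_midpoint_lt.2 hj⟩⟩

/-- Theorem 2: if `y` and `ystar` are distinct points of the open convex hull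
(interior of the convex hull) of `N + 1` affinely independent sensors in `ℝ^N`,
then some sensor is strictly closer to `y` than to `ystar`, and some sensor is
strictly closer to `ystar` than to `y`. -/
theorem exists_closer_sensor_both_sides {N : ℕ} (hN : 1 ≤ N)
    (x : Fin (N + 1) → EuclideanSpace ℝ (Fin N))
    (hx : AffineIndependent ℝ x)
    (y ystar : EuclideanSpace ℝ (Fin N))
    (hy : y ∈ interior (convexHull ℝ (Set.range x)))
    (hystar : ystar ∈ interior (convexHull ℝ (Set.range x)))
    (hne : y ≠ ystar) :
    (∃ i, ‖x i - y‖ < ‖x i - ystar‖) ∧ (∃ j, ‖x j - ystar‖ < ‖x j - y‖) :=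
  exists_closer_sensor_both_sides_general x y ystar hy hystar hne
end

section
/- Let N ≥ 1 and let x_1, …, x_{N+1} ∈ ℝ^N be affinely independent. Suppose y* lies in the open convex hull co{x_1,…,x_{N+1}} and y ∈ ℝ^N satisfies y ≠ y*. Then it is impossible that ‖x_i − y‖ ≤ ‖x_i − y*‖ for all i ∈ {1,…,N+1}; equivalently, there exists an index i with ‖x_i − y*‖ < ‖x_i − y‖. -/
open InnerProductSpace


/-- One-sided separation: if `ystar` lies in the open convex hull (interior of the
convex hull) of `N + 1` affinely independent sensors in `ℝ^N` and `y ≠ ystar`, then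
it is impossible that every sensor is at least as close to `y` as to `ystar`;
equivalently, some sensor is strictly closer to `ystar` than to `y`. -/
theorem exists_sensor_strictly_closer_to_source {N : ℕ} (hN : 1 ≤ N)
    (x : Fin (N + 1) → EuclideanSpace ℝ (Fin N))
    (hx : AffineIndependent ℝ x)
    (ystar : EuclideanSpace ℝ (Fin N))
    (hystar : ystar ∈ interior (convexHull ℝ (Set.range x)))
    (y : EuclideanSpace ℝ (Fin N)) (hne : y ≠ ystar) :
    ¬ (∀ i, ‖x i - y‖ ≤ ‖x i - ystar‖) ∧ ∃ i, ‖x i - ystar‖ < ‖x i - y‖ := by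
  have key : ¬ (∀ i, ‖x i - y‖ ≤ ‖x i - ystar‖) := by
    intro h
    set v : EuclideanSpace ℝ (Fin N) := ystar - y with hv
    have hv0 : v ≠ 0 := sub_ne_zero.mpr (Ne.symm hne)
    have hvnorm : 0 < ‖v‖ := norm_pos_iff.mpr hv0
    set c : ℝ := (‖ystar‖^2 - ‖y‖^2)/2 with hc
    have hhalf : ∀ i, ⟪v, x i⟫_ℝ ≤ c := by
      intro i
      have h1 := h i
      have h2 : ‖x i - y‖^2 ≤ ‖x i - ystar‖^2 := by
        apply sq_le_sq' <;> nlinarith [norm_nonneg (x i - y), norm_nonneg (x i - ystar)]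
      rw [norm_sub_sq_real, norm_sub_sq_real] at h2
      have : ⟪v, x i⟫_ℝ = ⟪x i, ystar⟫_ℝ - ⟪x i, y⟫_ℝ := by
        rw [hv, inner_sub_left, real_inner_comm ystar, real_inner_comm y]
      rw [this, hc]; nlinarith
    have hconv : convexHull ℝ (Set.range x) ⊆ {z | ⟪v, z⟫_ℝ ≤ c} := by
      apply convexHull_min
      · rintro z ⟨i, rfl⟩; exact hhalf i
      · exact convex_halfSpace_le ((innerSL ℝ v).toLinearMap.isLinear) c
    have hstar := interior_mono hconv hystar
    rw [mem_interior_iff_mem_nhds, Metric.mem_nhds_iff] at hstar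
    obtain ⟨ε, hε, hball⟩ := hstar
    set z : EuclideanSpace ℝ (Fin N) := ystar + (ε/(2*‖v‖)) • v with hz
    have hzball : z ∈ Metric.ball ystar ε := by
      rw [Metric.mem_ball, dist_eq_norm, hz]
      simp only [add_sub_cancel_left, norm_smul, Real.norm_eq_abs]
      rw [abs_of_pos (by positivity)]
      have : ‖v‖ * (ε/(2*‖v‖)) = ε/2 := by field_simp
      rw [mul_comm, this]; linarith
    have hzle : ⟪v, z⟫_ℝ ≤ c := hball hzball
    rw [hz, inner_add_right, real_inner_smul_right, real_inner_self_eq_norm_sq] at hzle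
    have hvy : ⟪v, ystar⟫_ℝ = ‖ystar‖^2 - ⟪ystar, y⟫_ℝ := by
      rw [hv, inner_sub_left, real_inner_self_eq_norm_sq, real_inner_comm]
    have hεv : ε/(2*‖v‖) * ‖v‖^2 = ε * ‖v‖ / 2 := by
      field_simp
    rw [hvy, hεv, hc] at hzle
    have hnv : ‖v‖^2 = ‖ystar‖^2 - 2*⟪ystar,y⟫_ℝ + ‖y‖^2 := by
      rw [hv, norm_sub_sq_real]
    nlinarith [sq_nonneg ‖v‖]
  refine ⟨key, ?_⟩
  push_neg at key
  obtain ⟨i, hi⟩ := key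
  exact ⟨i, hi⟩
end

section
/- Let N ≥ 1, let x_1, …, x_{N+1} ∈ ℝ^N be affinely independent, and let y lie in the open convex hull co{x_1,…,x_{N+1}}. If ξ = (ξ_1,…,ξ_{N+1}) ∈ ℝ^{N+1} satisfies Σ_{i=1}^{N+1} ξ_i (x_i − y) = 0 and ξ ≠ 0, then either ξ_i > 0 for every i or ξ_i < 0 for every i. -/
/-!
The barycentric coordinates `β` of `y` with respect to the affine basis `x` satisfy
`∑ β i • (x i - y) = 0`. Hence `ξ - (∑ ξ) • β` is a null vector whose weights sum to zero,
so it vanishes by affine independence: `ξ` is a multiple of `β`, and all `β i` are positive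
because `y` is interior to the simplex.
-/

open Finset

section

variable {ι k V P : Type*} [Fintype ι] [Ring k] [AddCommGroup V] [Module k V] [AddTorsor V P]

theorem AffineBasis.sum_coord_smul_vsub_eq_zero (b : AffineBasis ι k P) (q : P) :
    ∑ i, b.coord i q • (b i -ᵥ q) = 0 := by
  have h := congrArg (· -ᵥ q) (b.affineCombination_coord_eq_self q)
  rwa [univ.affineCombination_eq_weightedVSubOfPoint_vadd_of_sum_eq_one _ _
    (b.sum_coord_apply_eq_one q) q, vadd_vsub, vsub_self, univ.weightedVSubOfPoint_apply] at h

theorem AffineBasis.eq_sum_mul_coord_of_sum_smul_vsub_eq_zero (b : AffineBasis ι k P) {q : P}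
    {ξ : ι → k} (h : ∑ i, ξ i • (b i -ᵥ q) = 0) (i : ι) :
    ξ i = (∑ j, ξ j) * b.coord i q := by
  set w : ι → k := fun j => ξ j - (∑ j, ξ j) * b.coord j q
  have hw : ∑ j, w j = 0 := by
    rw [sum_sub_distrib, ← mul_sum, b.sum_coord_apply_eq_one, mul_one, sub_self]
  have hwv : univ.weightedVSub b w = (0 : V) := by
    rw [univ.weightedVSub_eq_weightedVSubOfPoint_of_sum_eq_zero _ _ hw q,
      univ.weightedVSubOfPoint_apply]
    simp only [w, sub_smul, sum_sub_distrib, mul_smul, ← smul_sum, h,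
      b.sum_coord_smul_vsub_eq_zero, smul_zero, sub_zero]
  exact sub_eq_zero.mp (b.ind univ w hw hwv i (mem_univ i))

end

theorem forall_pos_or_forall_neg_of_eq_mul_of_pos {ι R : Type*} [Ring R] [LinearOrder R]
    [IsStrictOrderedRing R] {ξ β : ι → R} {c : R} (hβ : ∀ i, 0 < β i)
    (hξβ : ∀ i, ξ i = c * β i) (hξ : ξ ≠ 0) : (∀ i, 0 < ξ i) ∨ (∀ i, ξ i < 0) := by
  rcases lt_trichotomy c 0 with hc | rfl | hc
  · exact .inr fun i => hξβ i ▸ mul_neg_of_neg_of_pos hc (hβ i)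
  · exact absurd (funext fun i => by simp [hξβ i]) hξ
  · exact .inl fun i => hξβ i ▸ mul_pos hc (hβ i)

theorem nullvector_sign_lemma_general {N : ℕ}
    (x : Fin (N + 1) → EuclideanSpace ℝ (Fin N))
    (hx : AffineIndependent ℝ x)
    (y : EuclideanSpace ℝ (Fin N))
    (hy : y ∈ interior (convexHull ℝ (Set.range x)))
    (ξ : Fin (N + 1) → ℝ)
    (hker : ∑ i, ξ i • (x i - y) = 0) (hξ : ξ ≠ 0) :
    (∀ i, 0 < ξ i) ∨ (∀ i, ξ i < 0) := by
  let b : AffineBasis (Fin (N + 1)) ℝ (EuclideanSpace ℝ (Fin N)) :=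
    ⟨x, hx, hx.affineSpan_eq_top_iff_card_eq_finrank_add_one.mpr (by simp)⟩
  have hcoord : ∀ i, 0 < b.coord i y := by
    rwa [show Set.range x = Set.range b from rfl, b.interior_convexHull] at hy
  exact forall_pos_or_forall_neg_of_eq_mul_of_pos hcoord
    (b.eq_sum_mul_coord_of_sum_smul_vsub_eq_zero hker) hξ

/-- Sign lemma from the proof of Theorem 3: if `y` lies in the open convex hull
(interior of the convex hull) of `N + 1` affinely independent sensors in `ℝ^N` and
`ξ ≠ 0` satisfies `∑ i, ξ i • (x i - y) = 0`, then the `ξ i` are either all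
strictly positive or all strictly negative. -/
theorem nullvector_sign_lemma {N : ℕ} (hN : 1 ≤ N)
    (x : Fin (N + 1) → EuclideanSpace ℝ (Fin N))
    (hx : AffineIndependent ℝ x)
    (y : EuclideanSpace ℝ (Fin N))
    (hy : y ∈ interior (convexHull ℝ (Set.range x)))
    (ξ : Fin (N + 1) → ℝ)
    (hker : ∑ i, ξ i • (x i - y) = 0) (hξ : ξ ≠ 0) :
    (∀ i, 0 < ξ i) ∨ (∀ i, ξ i < 0) :=
  nullvector_sign_lemma_general x hx y hy ξ hker hξ
end

section
/- Let N ≥ 1, let x_1, …, x_{N+1} ∈ ℝ^N be affinely independent, and fix α ≥ 0. Suppose y and y* both lie in the open convex hull co{x_1,…,x_{N+1}}, and A, A* > 0 satisfy A e^{−α‖x_i − y‖}/‖x_i − y‖² = A* e^{−α‖x_i − y*‖}/‖x_i − y*‖² for all i ∈ {1,…,N+1}. Then y = y* and A = A*. -/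
/-!
For `α ≥ 0` the profile `d ↦ e^{-αd}/d²` is strictly decreasing on `(0, ∞)`, so if the
intensities satisfy `A ≤ A*`, equal measurements force every sensor to be at least as close to
`y` as to `y*`. The sensors then lie in the closed half-space `{z | ‖z - y‖ ≤ ‖z - y*‖}`, and so
does their convex hull, which contains `y*`; hence `‖y* - y‖ ≤ 0`. Once `y = y*`, any sensor
distinct from `y` (one exists since `y` is an interior point of the hull) gives `A = A*`.
-/

open Real

theorem strictAntiOn_exp_neg_mul_div_sq {α : ℝ} (hα : 0 ≤ α) :
    StrictAntiOn (fun d : ℝ => exp (-α * d) / d ^ 2) (Set.Ioi 0) := by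
  intro d hd d' _ hdd'
  have hd : 0 < d := hd
  have hexp : exp (-α * d') ≤ exp (-α * d) := exp_le_exp.2 (by nlinarith)
  calc exp (-α * d') / d' ^ 2 ≤ exp (-α * d) / d' ^ 2 := by gcongr
    _ < exp (-α * d) / d ^ 2 := by gcongr

theorem le_of_mul_exp_neg_mul_div_sq_eq {α A A' d d' : ℝ} (hα : 0 ≤ α) (hA : 0 < A)
    (hAA' : A ≤ A') (hd' : 0 ≤ d')
    (heq : A * exp (-α * d) / d ^ 2 = A' * exp (-α * d') / d' ^ 2) : d ≤ d' := by
  by_contra! hlt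
  have hd : 0 < d := hd'.trans_lt hlt
  rcases hd'.eq_or_lt with rfl | hd'
  · rw [zero_pow two_ne_zero, div_zero] at heq
    exact (show 0 < A * exp (-α * d) / d ^ 2 by positivity).ne' heq
  · have hanti := strictAntiOn_exp_neg_mul_div_sq hα (Set.mem_Ioi.2 hd') (Set.mem_Ioi.2 hd) hlt
    have : A * (exp (-α * d) / d ^ 2) < A' * (exp (-α * d') / d' ^ 2) :=
      calc A * (exp (-α * d) / d ^ 2) < A * (exp (-α * d') / d' ^ 2) :=
            mul_lt_mul_of_pos_left hanti hA
        _ ≤ A' * (exp (-α * d') / d' ^ 2) := by gcongr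
    simp only [mul_div_assoc] at heq
    exact this.ne heq

section Hull

variable {E : Type*} [NormedAddCommGroup E] [InnerProductSpace ℝ E]

theorem convex_setOf_norm_sub_le_norm_sub (a b : E) :
    Convex ℝ {z : E | ‖z - a‖ ≤ ‖z - b‖} := by
  have hlin : IsLinearMap ℝ fun z : E => 2 * inner ℝ z (b - a) :=
    ⟨fun z w => by rw [inner_add_left]; ring,
     fun c z => by rw [real_inner_smul_left, smul_eq_mul]; ring⟩
  convert convex_halfSpace_le hlin (‖b‖ ^ 2 - ‖a‖ ^ 2) using 1
  ext z
  rw [Set.mem_ofPred_eq, Set.mem_ofPred_eq, ← sq_le_sq₀ (norm_nonneg _) (norm_nonneg _),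
    norm_sub_sq_real, norm_sub_sq_real, inner_sub_right]
  constructor <;> intro h <;> linarith

theorem eq_of_mem_convexHull_of_forall_norm_sub_le {s : Set E} {y y' : E}
    (hy : y ∈ convexHull ℝ s) (hcloser : ∀ p ∈ s, ‖p - y'‖ ≤ ‖p - y‖) : y = y' := by
  have hy_closer : ‖y - y'‖ ≤ ‖y - y‖ :=
    convexHull_min hcloser (convex_setOf_norm_sub_le_norm_sub y' y) hy
  rw [sub_self, norm_zero] at hy_closer
  exact sub_eq_zero.1 (norm_le_zero_iff.1 hy_closer)

theorem exists_ne_of_mem_interior_convexHull [Nontrivial E] {s : Set E} {y : E}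
    (hy : y ∈ interior (convexHull ℝ s)) : ∃ p ∈ s, p ≠ y := by
  by_contra! hs
  have hsub : interior (convexHull ℝ s) ⊆ interior {y} :=
    interior_mono (convexHull_min (fun p hp => hs p hp) (convex_singleton y))
  rw [interior_singleton] at hsub
  exact hsub hy

theorem eq_of_forall_mul_exp_neg_mul_div_sq_eq {ι : Type*} {x : ι → E} {α A A' : ℝ} {y y' : E}
    (hα : 0 ≤ α) (hA : 0 < A) (hAA' : A ≤ A') (hy' : y' ∈ convexHull ℝ (Set.range x))
    (h : ∀ i, A * exp (-α * ‖x i - y‖) / ‖x i - y‖ ^ 2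
            = A' * exp (-α * ‖x i - y'‖) / ‖x i - y'‖ ^ 2) : y = y' := by
  refine (eq_of_mem_convexHull_of_forall_norm_sub_le hy' ?_).symm
  rintro _ ⟨i, rfl⟩
  exact le_of_mul_exp_neg_mul_div_sq_eq hα hA hAA' (norm_nonneg _) (h i)

end Hull

theorem identifiability_in_open_hull_general {N : ℕ} (hN : 1 ≤ N)
    (x : Fin (N + 1) → EuclideanSpace ℝ (Fin N))
    (α : ℝ) (hα : 0 ≤ α)
    (y ystar : EuclideanSpace ℝ (Fin N))
    (hy : y ∈ interior (convexHull ℝ (Set.range x)))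
    (hystar : ystar ∈ interior (convexHull ℝ (Set.range x)))
    (A Astar : ℝ) (hA : 0 < A) (hAstar : 0 < Astar)
    (h : ∀ i, A * exp (-α * ‖x i - y‖) / ‖x i - y‖ ^ 2
            = Astar * exp (-α * ‖x i - ystar‖) / ‖x i - ystar‖ ^ 2) :
    y = ystar ∧ A = Astar := by
  have hyy : y = ystar := by
    rcases le_total A Astar with hle | hle
    · exact eq_of_forall_mul_exp_neg_mul_div_sq_eq hα hA hle (interior_subset hystar) h
    · exact (eq_of_forall_mul_exp_neg_mul_div_sq_eq hα hAstar hle (interior_subset hy)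
        fun i => (h i).symm).symm
  subst hyy
  have : Nontrivial (EuclideanSpace ℝ (Fin N)) :=
    Module.nontrivial_of_finrank_pos (by rw [finrank_euclideanSpace_fin]; omega)
  obtain ⟨_, ⟨i, rfl⟩, hi⟩ := exists_ne_of_mem_interior_convexHull hy
  have hprofile : exp (-α * ‖x i - y‖) / ‖x i - y‖ ^ 2 ≠ 0 := by
    have : ‖x i - y‖ ≠ 0 := norm_ne_zero_iff.2 (sub_ne_zero.2 hi)
    positivity
  simp only [mul_div_assoc] at h
  exact ⟨rfl, mul_right_cancel₀ hprofile (h i)⟩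

/-- Identifiability (uniqueness core of Theorem 3): if two intensity/location pairs
`(A, y)` and `(A*, y*)`, both with location in the open convex hull (interior of the
convex hull) of `N + 1` affinely independent sensors in `ℝ^N`, produce identical
noise-free measurements `A e^{-α‖x i - y‖}/‖x i - y‖² = A* e^{-α‖x i - y*‖}/‖x i - y*‖²`
at every sensor, then `y = y*` and `A = A*`. -/
theorem identifiability_in_open_hull {N : ℕ} (hN : 1 ≤ N)
    (x : Fin (N + 1) → EuclideanSpace ℝ (Fin N))
    (hx : AffineIndependent ℝ x)
    (α : ℝ) (hα : 0 ≤ α)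
    (y ystar : EuclideanSpace ℝ (Fin N))
    (hy : y ∈ interior (convexHull ℝ (Set.range x)))
    (hystar : ystar ∈ interior (convexHull ℝ (Set.range x)))
    (A Astar : ℝ) (hA : 0 < A) (hAstar : 0 < Astar)
    (h : ∀ i, A * exp (-α * ‖x i - y‖) / ‖x i - y‖ ^ 2
            = Astar * exp (-α * ‖x i - ystar‖) / ‖x i - ystar‖ ^ 2) :
    y = ystar ∧ A = Astar :=
  identifiability_in_open_hull_general hN x α hα y ystar hy hystar A Astar hA hAstar h
end
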